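/- arXiv:1810.08243 — 8 statements merged into one kernel-verified Lean document; each statement's English description precedes it below -/
import Mathlib

section
/- The Dubins-Spanier last-diminisher-style step preserves proportionality: if in a cake [y,1] each of n agents cuts at x_i with v_i(y, x_i) = v_i(y,1)/n, and the agent i* with the leftmost cut receives [y, x_{i*}], then (a) agent i* receives exactly a 1/n fraction of her value for [y,1], and (b) every remaining agent j ≠ i* values the remaining cake [x_{i*}, 1] at least (n-1)/n times her value for [y,1]. -/
/-- One step of the Dubins-Spanier procedure on the cake [y,1]: each of the n agents
cuts at x_i with v_i(y,x_i) = v_i(y,1)/n, and the agent i* with the leftmost cut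
receives [y, x_{i*}].  Then (a) agent i* receives exactly a 1/n fraction of her value
of [y,1], and (b) every other agent values the remaining cake [x_{i*},1] at least
(n-1)/n times her value of [y,1]. -/
theorem dubins_spanier_step
    (n : ℕ) (hn : 0 < n)
    (v : Fin n → ℝ → ℝ → ℝ)
    (hadd : ∀ i a b c, a ≤ b → b ≤ c → v i a b + v i b c = v i a c)
    (hnn : ∀ i a b, a ≤ b → 0 ≤ v i a b)
    (hpt : ∀ i a, v i a a = 0)
    (y : ℝ) (hy0 : 0 ≤ y) (hy1 : y ≤ 1)
    (x : Fin n → ℝ) (hxr : ∀ i, y ≤ x i ∧ x i ≤ 1)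
    (hcut : ∀ i, v i y (x i) = v i y 1 / n)
    (istar : Fin n) (hmin : ∀ j, x istar ≤ x j) :
    v istar y (x istar) = v istar y 1 / n ∧
    ∀ j, j ≠ istar → ((n : ℝ) - 1) / n * v j y 1 ≤ v j (x istar) 1 := by
  refine ⟨hcut istar, fun j _ => ?_⟩
  have h1 := hadd j y (x istar) (x j) (hxr istar).1 (hmin j)
  have h2 := hadd j y (x istar) 1 (hxr istar).1 (hxr istar).2
  have h3 := hnn j (x istar) (x j) (hmin j)
  have h4 := hcut j
  have hn' : (1:ℝ) ≤ n := by exact_mod_cast hn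
  have hnpos : (0:ℝ) < n := by positivity
  have : v j y (x istar) ≤ v j y 1 / n := by linarith
  have hv1 := hnn j y 1 hy1
  have key : ((n:ℝ) - 1) / n * v j y 1 = v j y 1 - v j y 1 / n := by
    field_simp
  linarith
end

section
/- Proportionality of the Dubins-Spanier procedure for n agents follows by induction: if each agent always cuts so her left piece is worth exactly a 1/k fraction of her value of the remaining cake when k agents remain, and the leftmost cutter exits with her piece, then every agent's final piece is worth at least 1/n of her value of the whole cake. -/
/-- Proportionality of the Dubins-Spanier procedure for n agents: the execution is
described by an exit order σ (σ k is the agent exiting at step k) and the sequence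
of cut points 0 = y₀ ≤ y₁ ≤ ... ≤ yₙ = 1, where the agent exiting at step k receives
[y_k, y_{k+1}].  If every exiting agent cut truthfully (her piece is worth exactly a
1/(n-k) fraction of her value of the remaining cake [y_k, 1]), and she had the
leftmost cut (every agent exiting later values [y_k, y_{k+1}] at most a 1/(n-k)
fraction of her value of [y_k,1]), then every agent's final piece is worth at least
1/n of her value of the whole cake. -/
theorem dubins_spanier_proportional
    (n : ℕ) (hn : 0 < n)
    (v : Fin n → ℝ → ℝ → ℝ)
    (hadd : ∀ i a b c, a ≤ b → b ≤ c → v i a b + v i b c = v i a c)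
    (hnn : ∀ i a b, a ≤ b → 0 ≤ v i a b)
    (hnorm : ∀ i, v i 0 1 = 1)
    (hpt : ∀ i a, v i a a = 0)
    (σ : Equiv.Perm (Fin n))
    (y : Fin (n + 1) → ℝ)
    (hmono : Monotone y) (hy0 : y 0 = 0) (hylast : y (Fin.last n) = 1)
    (hcut : ∀ k : Fin n,
      v (σ k) (y k.castSucc) (y k.succ) = v (σ k) (y k.castSucc) 1 / ((n : ℝ) - (k : ℕ)))
    (hleft : ∀ k m : Fin n, k < m →
      v (σ m) (y k.castSucc) (y k.succ) ≤ v (σ m) (y k.castSucc) 1 / ((n : ℝ) - (k : ℕ))) :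
    ∀ k : Fin n, 1 / (n : ℝ) ≤ v (σ k) (y k.castSucc) (y k.succ) := by

  intro k
  set i := σ k with hi
  have hy1 : ∀ m : Fin (n+1), y m ≤ 1 := fun m => hylast ▸ hmono (Fin.le_last m)
  have hkn : (k : ℕ) < n := k.isLt
  have key : ∀ j : ℕ, ∀ h : j < n + 1, j ≤ (k : ℕ) →
      ((n : ℝ) - j) / n ≤ v i (y ⟨j, h⟩) 1 := by
    intro j
    induction j with
    | zero =>
      intro h _
      have : (⟨0, h⟩ : Fin (n+1)) = 0 := rfl
      rw [this, hy0, hnorm]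
      have hn0 : (0 : ℝ) < n := by exact_mod_cast hn
      simp [div_self (ne_of_gt hn0)]
    | succ j ih =>
      intro h hj
      have hjk : j < (k : ℕ) := by omega
      have hjn : j < n := hjk.trans hkn
      have hj1 : j < n + 1 := by omega
      have ha := ih hj1 (le_of_lt hjk)
      set a := v i (y ⟨j, hj1⟩) 1 with hadef
      set b := v i (y ⟨j, hj1⟩) (y ⟨j+1, h⟩) with hbdef
      set c := v i (y ⟨j+1, h⟩) 1 with hcdef
      have hlt : (⟨j, hjn⟩ : Fin n) < k := hjk
      have hb : b ≤ a / ((n : ℝ) - j) := by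
        have := hleft ⟨j, hjn⟩ k hlt
        simpa [hi, Fin.castSucc, Fin.succ, hadef, hbdef] using this
      have hsum : b + c = a :=
        hadd i _ _ _ (hmono (by exact Fin.mk_le_mk.mpr (Nat.le_succ j))) (hy1 _)
      have hd1 : (1 : ℝ) ≤ (n : ℝ) - j := by
        have : (j : ℝ) + 1 ≤ n := by exact_mod_cast hjn
        linarith
      have hd0 : (0 : ℝ) < (n : ℝ) - j := by linarith
      have hn0 : (0 : ℝ) < n := by exact_mod_cast hn
      have hbd : b * ((n : ℝ) - j) ≤ a := by
        rw [← le_div_iff₀ hd0]; exact hb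
      have han : ((n : ℝ) - j) ≤ a * n := by
        have := (div_le_iff₀ hn0).mp ha
        linarith
      have h1 : a * ((n : ℝ) - j - 1) ≤ c * ((n : ℝ) - j) := by nlinarith [hbd, hsum]
      have goal : ((n : ℝ) - j - 1) ≤ c * n := by
        nlinarith [mul_le_mul_of_nonneg_right han (by linarith : (0:ℝ) ≤ (n:ℝ) - j - 1),
          mul_le_mul_of_nonneg_right h1 (le_of_lt hn0), hd0, hn0]
      have : ((n : ℝ) - (j + 1 : ℕ)) / n ≤ c := by
        rw [div_le_iff₀ hn0]
        push_cast
        linarith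
      simpa [hcdef] using this
  have hk := key (k : ℕ) (by omega) le_rfl
  have hcs : (⟨(k : ℕ), by omega⟩ : Fin (n+1)) = k.castSucc := rfl
  rw [hcs] at hk
  rw [hcut k]
  have hd1 : (1 : ℝ) ≤ (n : ℝ) - (k : ℕ) := by
    have : ((k : ℕ) : ℝ) + 1 ≤ n := by exact_mod_cast hkn
    linarith
  have hd0 : (0 : ℝ) < (n : ℝ) - (k : ℕ) := by linarith
  have hn0 : (0 : ℝ) < n := by exact_mod_cast hn
  rw [le_div_iff₀ hd0]
  have heq : (1 : ℝ) / n * ((n : ℝ) - (k : ℕ)) = ((n : ℝ) - (k : ℕ)) / n := by ring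
  rw [heq]
  exact hk
end

section
/- The Even-Paz procedure for n = 2^k agents is proportional: when all agents truthfully cut at their half-value point at each recursive step, and the agents are split at the median cut into two groups of n/2 dividing the left and right subcakes respectively, every agent ends up with a piece worth at least 1/n of her value for the whole cake. -/
open scoped Classical

/-- The Even-Paz procedure for n = 2^k agents is proportional.  The execution is
described level by level: at level t every agent i works on the subcake
[a t i, b t i]; initially this is [0,1] for everybody.  At each level t < k every
agent cuts her current subcake at her half-value point c t i; within each group
(agents sharing the same subcake, a group has 2^(k-t) members) there is a median
cut x* (the cut of one of the group members, with exactly 2^(k-t-1) members of the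
group cutting at or below x*): the agents with c t i ≤ x* move to [a t i, x*], the
others move to [x*, b t i].  After level k each agent holds her own piece
[a k i, b k i], and it is worth at least 1/2^k = 1/n to her. -/
theorem even_paz_proportional
    (k : ℕ)
    (v : Fin (2 ^ k) → ℝ → ℝ → ℝ)
    (hadd : ∀ i a b c, a ≤ b → b ≤ c → v i a b + v i b c = v i a c)
    (hnn : ∀ i a b, a ≤ b → 0 ≤ v i a b)
    (hnorm : ∀ i, v i 0 1 = 1)
    (hpt : ∀ i a, v i a a = 0)
    (a b c : ℕ → Fin (2 ^ k) → ℝ)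
    (ha0 : ∀ i, a 0 i = 0) (hb0 : ∀ i, b 0 i = 1)
    (hab : ∀ t i, t ≤ k → a t i ≤ b t i)
    (hcut : ∀ t i, t < k →
      a t i ≤ c t i ∧ c t i ≤ b t i ∧ v i (a t i) (c t i) = v i (a t i) (b t i) / 2)
    (hgroup : ∀ t i, t ≤ k →
      (Finset.univ.filter fun j => a t j = a t i ∧ b t j = b t i).card = 2 ^ (k - t))
    (hsplit : ∀ t i, t < k → ∃ xstar : ℝ,
      (∃ j0 : Fin (2 ^ k), (a t j0 = a t i ∧ b t j0 = b t i) ∧ c t j0 = xstar) ∧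
      (Finset.univ.filter fun j =>
        (a t j = a t i ∧ b t j = b t i) ∧ c t j ≤ xstar).card = 2 ^ (k - t - 1) ∧
      ((c t i ≤ xstar ∧ a (t + 1) i = a t i ∧ b (t + 1) i = xstar) ∨
       (xstar < c t i ∧ a (t + 1) i = xstar ∧ b (t + 1) i = b t i))) :
    ∀ i, 1 / (2 ^ k : ℝ) ≤ v i (a k i) (b k i) := by
  have key : ∀ t, t ≤ k → ∀ i, 1 / (2 ^ t : ℝ) ≤ v i (a t i) (b t i) := by
    intro t
    induction t with
    | zero => intro _ i; simp [ha0, hb0, hnorm]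
    | succ t ih =>
      intro ht i
      have htk : t < k := ht
      have ihi := ih (le_of_lt htk) i
      obtain ⟨hac, hcb, hhalf⟩ := hcut t i htk
      obtain ⟨x, ⟨j0, ⟨haj, hbj⟩, hcj⟩, -, hcase⟩ := hsplit t i htk
      obtain ⟨haj0, hcbj0, -⟩ := hcut t j0 htk
      have hax : a t i ≤ x := by rw [← hcj, ← haj]; exact haj0
      have hxb : x ≤ b t i := by rw [← hcj, ← hbj]; exact hcbj0
      rcases hcase with ⟨hcx, ha1, hb1⟩ | ⟨hxc, ha1, hb1⟩
      · rw [ha1, hb1]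
        have h1 := hadd i (a t i) (c t i) x hac hcx
        have h2 := hnn i (c t i) x hcx
        have : (1 / (2 ^ (t+1) : ℝ)) ≤ v i (a t i) (b t i) / 2 := by
          rw [pow_succ]
          have he : (1:ℝ)/(2^t*2) = (1/2^t)/2 := by ring
          linarith
        linarith
      · rw [ha1, hb1]
        have h1 := hadd i x (c t i) (b t i) (le_of_lt hxc) hcb
        have h2 := hnn i x (c t i) (le_of_lt hxc)
        have h3 := hadd i (a t i) (c t i) (b t i) hac hcb
        have : (1 / (2 ^ (t+1) : ℝ)) ≤ v i (a t i) (b t i) / 2 := by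
          rw [pow_succ]
          have he : (1:ℝ)/(2^t*2) = (1/2^t)/2 := by ring
          linarith
        linarith
  exact key k le_rfl
end

section
/- The Selfridge-Conway procedure is envy-free when all three agents act truthfully: in the resulting allocation of the whole cake [0,1] among three agents, no agent values another agent's total allocated piece (main piece plus trimmings share) more than her own. -/
/-- The Selfridge-Conway procedure is envy-free when all three agents act truthfully.
Agent 0 (the cutter) splits the cake [0,1] into three pieces I 0, I 1, I 2 each worth
1/3 to her.  Agent 1 (the trimmer) trims her (weakly) most valuable piece — w.l.o.g.
I 0 — into I₁' and the trimmings T so that v₁(I₁') equals her second most valuable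
piece's value.  The pieces P = (I₁', I 1, I 2) of the modified cake are assigned by
the permutation π (agent p receives P (π p)): agent 2 chooses her favorite; if
agent 2 did not take I₁' then agent 1 must take I₁', otherwise agent 1 chooses her
favorite remaining piece; agent 0 takes the leftover.  Let i ∈ {1,2} be the holder
of I₁' and j the other of {1,2}.  Agent j splits T into three parts Tp, each worth
v_j(T)/3 to her; then agents i, 0, j pick a part each in that order (described by
the permutation τ), each truthfully taking her favorite remaining part.  In the
resulting allocation (agent p gets P (π p) ∪ Tp (τ p)) no agent values another
agent's allocated piece more than her own. -/
theorem selfridge_conway_envyFree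
    (v : Fin 3 → Set ℝ → ℝ)
    (hnn : ∀ i S, 0 ≤ v i S)
    (hadd : ∀ i S T, Disjoint S T → v i (S ∪ T) = v i S + v i T)
    (hnorm : ∀ i, v i (Set.Icc (0 : ℝ) 1) = 1)
    (I : Fin 3 → Set ℝ)
    (hIdisj : Pairwise (Function.onFun Disjoint I))
    (hIcover : (⋃ q, I q) = Set.Icc (0 : ℝ) 1)
    (hIcut : ∀ q, v 0 (I q) = 1 / 3)
    (hbest : ∀ q, v 1 (I q) ≤ v 1 (I 0))
    (I1' T : Set ℝ)
    (hsplit : I1' ∪ T = I 0)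
    (hdisjT : Disjoint I1' T)
    (htrim : v 1 I1' = max (v 1 (I 1)) (v 1 (I 2)))
    (P : Fin 3 → Set ℝ)
    (hP0 : P 0 = I1') (hP1 : P 1 = I 1) (hP2 : P 2 = I 2)
    (π : Equiv.Perm (Fin 3))
    (hch2 : ∀ q, v 2 (P q) ≤ v 2 (P (π 2)))
    (hch1a : π 2 ≠ 0 → π 1 = 0)
    (hch1b : π 2 = 0 → ∀ q, q ≠ π 2 → v 1 (P q) ≤ v 1 (P (π 1)))
    (i j : Fin 3) (hij : i ≠ j) (hi0 : i ≠ 0) (hj0 : j ≠ 0) (hπi : π i = 0)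
    (Tp : Fin 3 → Set ℝ)
    (hTpdisj : Pairwise (Function.onFun Disjoint Tp))
    (hTpcover : (⋃ a, Tp a) = T)
    (hTpeq : ∀ a, v j (Tp a) = v j T / 3)
    (τ : Equiv.Perm (Fin 3))
    (hτi : ∀ a, v i (Tp a) ≤ v i (Tp (τ i)))
    (hτ0 : ∀ a, a ≠ τ i → v 0 (Tp a) ≤ v 0 (Tp (τ 0))) :
    ∀ p q : Fin 3, v p (P (π q) ∪ Tp (τ q)) ≤ v p (P (π p) ∪ Tp (τ p)) := by
  -- basic facts
  have hfin3 : ∀ x : Fin 3, x = 0 ∨ x = 1 ∨ x = 2 := by decide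
  have hmono : ∀ (p : Fin 3) (S U : Set ℝ), S ⊆ U → v p S ≤ v p U := by
    intro p S U hSU
    have h1 : U = S ∪ (U \ S) := (Set.union_diff_cancel hSU).symm
    have h2 : Disjoint S (U \ S) := Set.disjoint_sdiff_right
    have := hadd p S (U \ S) h2
    rw [← h1] at this
    linarith [hnn p (U \ S)]
  have hTsub : T ⊆ I 0 := by rw [← hsplit]; exact Set.subset_union_right
  have hTpsub : ∀ a, Tp a ⊆ T := by
    intro a; rw [← hTpcover]; exact Set.subset_iUnion Tp a
  have hdisjPT : ∀ x y, Disjoint (P x) (Tp y) := by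
    intro x y
    have hPT : Disjoint (P x) T := by
      rcases hfin3 x with h | h | h <;> subst h
      · rw [hP0]; exact hdisjT
      · rw [hP1]
        exact (hIdisj (show (1 : Fin 3) ≠ 0 by decide)).mono_right hTsub
      · rw [hP2]
        exact (hIdisj (show (2 : Fin 3) ≠ 0 by decide)).mono_right hTsub
    exact hPT.mono_right (hTpsub y)
  have hsum : ∀ p x y, v p (P x ∪ Tp y) = v p (P x) + v p (Tp y) := by
    intro p x y; exact hadd p _ _ (hdisjPT x y)
  -- which of 1,2 is i
  have hij12 : (i = 1 ∧ j = 2) ∨ (i = 2 ∧ j = 1) := by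
    rcases hfin3 i with h | h | h <;> rcases hfin3 j with h' | h' | h' <;>
      simp_all
  intro p q
  rw [hsum, hsum]
  rcases hfin3 p with hp | hp | hp <;> subst hp
  · -- agent 0
    have h0split : v 0 I1' + v 0 T = 1 / 3 := by
      rw [← hadd 0 _ _ hdisjT, hsplit, hIcut 0]
    have hπ0ne : π 0 ≠ 0 := by
      intro h
      exact hi0 (π.injective (hπi.trans h.symm))
    have hval : ∀ x : Fin 3, x ≠ 0 → v 0 (P x) = 1 / 3 := by
      intro x hx
      rcases hfin3 x with h | h | h <;> subst h
      · exact absurd rfl hx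
      · rw [hP1, hIcut 1]
      · rw [hP2, hIcut 2]
    have hv0 : v 0 (P (π 0)) = 1 / 3 := hval _ hπ0ne
    by_cases hq : π q = 0
    · -- q = i, holder of I1'
      have hTple : v 0 (Tp (τ q)) ≤ v 0 T := hmono 0 _ _ (hTpsub (τ q))
      have : v 0 (P (π q)) = v 0 I1' := by rw [hq, hP0]
      have hnnT := hnn 0 (Tp (τ 0))
      linarith
    · -- q ≠ i
      have hqi : q ≠ i := by intro h; exact hq (h ▸ hπi)
      have hτqi : τ q ≠ τ i := fun h => hqi (τ.injective h)
      have h1 := hτ0 (τ q) hτqi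
      have h2 : v 0 (P (π q)) = 1 / 3 := hval _ hq
      linarith
  · -- agent 1
    have hmain : ∀ x, v 1 (P x) ≤ v 1 (P (π 1)) := by
      rcases hij12 with ⟨hi, hj⟩ | ⟨hi, hj⟩
      · -- i = 1 : π 1 = 0, P (π 1) = I1'
        subst hi
        intro x
        rw [hπi, hP0, htrim]
        rcases hfin3 x with h | h | h <;> subst h
        · rw [hP0, htrim]
        · rw [hP1]; exact le_max_left _ _
        · rw [hP2]; exact le_max_right _ _
      · -- i = 2 : π 2 = 0
        subst hi
        have h20 : π 2 = 0 := hπi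
        have hb := hch1b h20
        intro x
        by_cases hx : x = π 2
        · subst hx
          rw [h20, hP0, htrim]
          have h1 := hb 1 (by rw [h20]; decide)
          have h2 := hb 2 (by rw [h20]; decide)
          rw [hP1] at h1; rw [hP2] at h2
          exact max_le h1 h2
        · exact hb x hx
    have htr : ∀ a, v 1 (Tp a) ≤ v 1 (Tp (τ 1)) := by
      rcases hij12 with ⟨hi, hj⟩ | ⟨hi, hj⟩
      · subst hi; exact hτi
      · subst hj; intro a; rw [hTpeq a, hTpeq (τ 1)]
    exact add_le_add (hmain (π q)) (htr (τ q))
  · -- agent 2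
    have htr : ∀ a, v 2 (Tp a) ≤ v 2 (Tp (τ 2)) := by
      rcases hij12 with ⟨hi, hj⟩ | ⟨hi, hj⟩
      · subst hj; intro a; rw [hTpeq a, hTpeq (τ 2)]
      · subst hi; exact hτi
    exact add_le_add (hch2 (π q)) (htr (τ q))
end

section
/- The asymmetric cut-and-choose procedure is (1/2)-strategy-proof and this bound is tight: for any valuations, no manipulation by the cutter gains her more than 1/2 over truth-telling (since truth-telling guarantees 1/2 and total value is 1), and there exist valuations where the cutter gains arbitrarily close to 1/2 by manipulating (truthful payoff 1/2, manipulated payoff arbitrarily close to 1). -/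
/-- Interval valuations are additive. -/
def IntervalAdditive (v : ℝ → ℝ → ℝ) : Prop :=
  ∀ a b c, a ≤ b → b ≤ c → v a b + v b c = v a c

/-- Interval valuations are nonnegative. -/
def IntervalNonneg (v : ℝ → ℝ → ℝ) : Prop := ∀ a b, a ≤ b → 0 ≤ v a b

/-- Payoff of the cutter (valuation v0) in asymmetric cut-and-choose when she cuts
at x and the chooser (valuation v1) truthfully takes her weakly preferred piece,
breaking ties in favor of the left piece. -/
noncomputable def accPayoff (v0 v1 : ℝ → ℝ → ℝ) (x : ℝ) : ℝ :=
  if v1 x 1 ≤ v1 0 x then v0 x 1 else v0 0 x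

/-- The asymmetric cut-and-choose procedure is (1/2)-strategy-proof and this bound is
tight: (a) for any valuations, no cut gains the cutter more than 1/2 over cutting at
her true half-value point; (b) for every δ > 0 there are valuations where truthful
play yields exactly 1/2 while some manipulation yields more than 1 - δ. -/
theorem asymmetric_cut_and_choose_half_strategyproof_tight :
    (∀ v0 v1 : ℝ → ℝ → ℝ,
      IntervalAdditive v0 → IntervalNonneg v0 → v0 0 1 = 1 →
      IntervalAdditive v1 → IntervalNonneg v1 → v1 0 1 = 1 →
      (∀ a, v0 a a = 0) → (∀ a, v1 a a = 0) →
      ∀ xt x' : ℝ, 0 ≤ xt → xt ≤ 1 → 0 ≤ x' → x' ≤ 1 →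
        v0 0 xt = 1 / 2 → v0 xt 1 = 1 / 2 →
        accPayoff v0 v1 x' - accPayoff v0 v1 xt ≤ 1 / 2) ∧
    (∀ δ : ℝ, 0 < δ →
      ∃ v0 v1 : ℝ → ℝ → ℝ,
        IntervalAdditive v0 ∧ IntervalNonneg v0 ∧ v0 0 1 = 1 ∧
        IntervalAdditive v1 ∧ IntervalNonneg v1 ∧ v1 0 1 = 1 ∧
        (∀ a, v0 a a = 0) ∧ (∀ a, v1 a a = 0) ∧
        ∃ xt x' : ℝ, 0 ≤ xt ∧ xt ≤ 1 ∧ 0 ≤ x' ∧ x' ≤ 1 ∧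
          v0 0 xt = 1 / 2 ∧ v0 xt 1 = 1 / 2 ∧
          accPayoff v0 v1 xt = 1 / 2 ∧ 1 - δ < accPayoff v0 v1 x') := by
  constructor
  · intro v0 v1 h0add h0nn h01 _ _ _ _ _ xt x' _ _ hx'0 hx'1 hL hR
    have hsplit : v0 0 x' + v0 x' 1 = 1 := by
      have := h0add 0 x' 1 hx'0 hx'1; linarith
    have h1 : accPayoff v0 v1 x' ≤ 1 := by
      unfold accPayoff
      split
      · have := h0nn 0 x' hx'0; linarith
      · have := h0nn x' 1 hx'1; linarith
    have h2 : accPayoff v0 v1 xt = 1 / 2 := by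
      unfold accPayoff; split <;> simp [hL, hR]
    linarith
  · intro δ hδ
    set c : ℝ := min δ 1 / 2 with hc
    have hc0 : 0 < c := by positivity
    have hcδ : c < δ := by
      have : min δ 1 ≤ δ := min_le_left _ _
      simp only [hc]; linarith
    have hc1 : c ≤ 1 / 2 := by
      have : min δ 1 ≤ 1 := min_le_right _ _
      simp only [hc]; linarith
    set f : ℝ → ℝ := fun t => min (max t 0) c / c with hf
    have hfmono : Monotone f := by
      intro a b hab
      have h : min (max a 0) c ≤ min (max b 0) c :=
        min_le_min (max_le_max hab le_rfl) le_rfl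
      show min (max a 0) c / c ≤ min (max b 0) c / c
      exact div_le_div_of_nonneg_right h hc0.le
    have hf0 : f 0 = 0 := by
      show min (max (0:ℝ) 0) c / c = 0
      rw [max_self, min_eq_left hc0.le, zero_div]
    have hfc : f c = 1 := by
      show min (max c 0) c / c = 1
      rw [max_eq_left hc0.le, min_self, div_self hc0.ne']
    have hf1 : f 1 = 1 := by
      show min (max (1:ℝ) 0) c / c = 1
      rw [max_eq_left (by norm_num : (0:ℝ) ≤ 1), min_eq_right (by linarith),
        div_self hc0.ne']
    have hfhalf : f (1/2) = 1 := by
      show min (max (1/2:ℝ) 0) c / c = 1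
      rw [max_eq_left (by norm_num : (0:ℝ) ≤ 1/2), min_eq_right hc1,
        div_self hc0.ne']
    refine ⟨fun a b => b - a, fun a b => f b - f a,
      fun a b c' _ _ => by ring,
      fun a b hab => by simp only; linarith,
      by norm_num,
      fun a b c' _ _ => by ring,
      fun a b hab => by have := hfmono hab; simp only; linarith,
      by simp only; rw [hf1, hf0]; ring,
      fun a => by ring,
      fun a => by ring,
      1/2, c, by norm_num, by norm_num, hc0.le, by linarith,
      by norm_num, by norm_num, ?_, ?_⟩
    · unfold accPayoff
      rw [if_pos (by simp only; rw [hf1, hfhalf, hf0]; norm_num)]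
      norm_num
    · unfold accPayoff
      rw [if_pos (by simp only; rw [hf1, hfc, hf0]; norm_num)]
      simp only; linarith
end

section
/- The symmetric cut-and-choose procedure admits a manipulation yielding the cutter utility 1 while truthful play yields 1/2: for small ε > 0, let v_1 assign value 1/2 to [0,1/4] and 1/2 to [1/2-2ε, 1/2-ε], and v_2 assign value 1/2 to [1/2, 1/2+ε] and 1/2 to [1/2+ε, 1/2+2ε] (uniformly within each, 0 elsewhere). Truthful cuts are x_1 = 1/4 and x_2 = 1/2+ε, giving agent 1 the piece [0, 3/8+ε/2) worth 1/2 to her. If instead agent 1 cuts at x_1' = 1/2-ε, she receives [0, 1/2) worth 1 to her (and agent 2 still receives value 1). -/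
/-- Length of the overlap of [a,b] with [s,t]. -/
noncomputable def olen (s t a b : ℝ) : ℝ := max 0 (min b t - max a s)


lemma olen_full {s t a b : ℝ} (h1 : a ≤ s) (h2 : t ≤ b) (h3 : s ≤ t) :
    olen s t a b = t - s := by
  unfold olen
  rw [min_eq_right h2, max_eq_right h1, max_eq_right (by linarith)]

lemma olen_zero {s t a b : ℝ} (h : min b t ≤ max a s) :
    olen s t a b = 0 := by
  unfold olen
  rw [max_eq_left (by linarith)]

set_option maxHeartbeats 1600000 in
/-- The symmetric cut-and-choose procedure admits a manipulation yielding the cutter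
utility 1 while truthful play yields 1/2.  For small ε > 0: agent 1's valuation v1
puts mass 1/2 uniformly on [0,1/4] and mass 1/2 uniformly on [1/2-2ε, 1/2-ε]; agent
2's valuation v2 puts mass 1/2 uniformly on [1/2, 1/2+ε] and mass 1/2 uniformly on
[1/2+ε, 1/2+2ε].  The truthful cuts are x₁ = 1/4 and x₂ = 1/2+ε; then agent 1's
piece [0, 3/8+ε/2) is worth 1/2 to her.  If instead agent 1 cuts at x₁' = 1/2-ε,
she receives [0, 1/2), worth 1 to her, and agent 2 still receives value 1. -/
theorem symmetric_cut_and_choose_manipulation (ε : ℝ) (hε : 0 < ε) (hε' : ε < 1 / 100) :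
    let v1 : ℝ → ℝ → ℝ := fun a b =>
      2 * olen 0 (1 / 4) a b + (1 / (2 * ε)) * olen (1 / 2 - 2 * ε) (1 / 2 - ε) a b
    let v2 : ℝ → ℝ → ℝ := fun a b =>
      (1 / (2 * ε)) * olen (1 / 2) (1 / 2 + ε) a b +
        (1 / (2 * ε)) * olen (1 / 2 + ε) (1 / 2 + 2 * ε) a b
    -- total values are 1 and the cuts x₁ = 1/4, x₂ = 1/2+ε are truthful half-cuts:
    v1 0 1 = 1 ∧ v2 0 1 = 1 ∧
    v1 0 (1 / 4) = 1 / 2 ∧ v1 (1 / 4) 1 = 1 / 2 ∧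
    v2 0 (1 / 2 + ε) = 1 / 2 ∧ v2 (1 / 2 + ε) 1 = 1 / 2 ∧
    -- truthful play: agent 1 receives [0, (1/4 + (1/2+ε))/2), worth 1/2 to her:
    v1 0 ((1 / 4 + (1 / 2 + ε)) / 2) = 1 / 2 ∧
    -- manipulation x₁' = 1/2-ε ≤ x₂: agent 1 receives [0, 1/2), worth 1 to her,
    -- and agent 2 receives [1/2, 1], still worth 1 to her:
    (1 / 2 - ε : ℝ) ≤ 1 / 2 + ε ∧
    v1 0 ((1 / 2 - ε + (1 / 2 + ε)) / 2) = 1 ∧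
    v2 ((1 / 2 - ε + (1 / 2 + ε)) / 2) 1 = 1 := by
  intro v1 v2
  have e0 : olen 0 (1/4) 0 (1/4) = 1/4 := by rw [olen_full] <;> norm_num
  have e1 : olen 0 (1/4) 0 1 = 1/4 := by rw [olen_full] <;> norm_num
  have e2 : olen (1/2 - 2*ε) (1/2 - ε) 0 1 = ε := by
    rw [olen_full] <;> [ring; linarith; linarith; linarith]
  have e3 : olen (1/2) (1/2 + ε) 0 1 = ε := by
    rw [olen_full] <;> [ring; linarith; linarith; linarith]
  have e4 : olen (1/2 + ε) (1/2 + 2*ε) 0 1 = ε := by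
    rw [olen_full] <;> [ring; linarith; linarith; linarith]
  have e5 : olen (1/2 - 2*ε) (1/2 - ε) 0 (1/4) = 0 := by
    apply olen_zero; first
      | exact le_trans (min_le_left _ _) (le_max_of_le_right (by linarith))
      | exact le_trans (min_le_right _ _) (le_max_of_le_left (by linarith))
  have e6 : olen 0 (1/4) (1/4) 1 = 0 := by
    apply olen_zero; first
      | exact le_trans (min_le_left _ _) (le_max_of_le_right (by linarith))
      | exact le_trans (min_le_right _ _) (le_max_of_le_left (by linarith))
  have e7 : olen (1/2 - 2*ε) (1/2 - ε) (1/4) 1 = ε := by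
    rw [olen_full] <;> [ring; linarith; linarith; linarith]
  have e8 : olen (1/2) (1/2 + ε) 0 (1/2 + ε) = ε := by
    rw [olen_full] <;> [ring; linarith; linarith; linarith]
  have e9 : olen (1/2 + ε) (1/2 + 2*ε) 0 (1/2 + ε) = 0 := by
    apply olen_zero; first
      | exact le_trans (min_le_left _ _) (le_max_of_le_right (by linarith))
      | exact le_trans (min_le_right _ _) (le_max_of_le_left (by linarith))
  have e10 : olen (1/2) (1/2 + ε) (1/2 + ε) 1 = 0 := by
    apply olen_zero; first
      | exact le_trans (min_le_left _ _) (le_max_of_le_right (by linarith))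
      | exact le_trans (min_le_right _ _) (le_max_of_le_left (by linarith))
  have e11 : olen (1/2 + ε) (1/2 + 2*ε) (1/2 + ε) 1 = ε := by
    rw [olen_full] <;> [ring; linarith; linarith; linarith]
  have e12 : olen 0 (1/4) 0 ((1/4 + (1/2 + ε))/2) = 1/4 := by
    rw [olen_full] <;> [ring; linarith; linarith; linarith]
  have e13 : olen (1/2 - 2*ε) (1/2 - ε) 0 ((1/4 + (1/2 + ε))/2) = 0 := by
    apply olen_zero; first
      | exact le_trans (min_le_left _ _) (le_max_of_le_right (by linarith))
      | exact le_trans (min_le_right _ _) (le_max_of_le_left (by linarith))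
  have e14 : olen 0 (1/4) 0 ((1/2 - ε + (1/2 + ε))/2) = 1/4 := by
    rw [olen_full] <;> [ring; linarith; linarith; linarith]
  have e15 : olen (1/2 - 2*ε) (1/2 - ε) 0 ((1/2 - ε + (1/2 + ε))/2) = ε := by
    rw [olen_full] <;> [ring; linarith; linarith; linarith]
  have e16 : olen (1/2) (1/2 + ε) ((1/2 - ε + (1/2 + ε))/2) 1 = ε := by
    rw [olen_full] <;> [ring; linarith; linarith; linarith]
  have e17 : olen (1/2 + ε) (1/2 + 2*ε) ((1/2 - ε + (1/2 + ε))/2) 1 = ε := by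
    rw [olen_full] <;> [ring; linarith; linarith; linarith]
  have hne : (2*ε) ≠ 0 := by positivity
  refine ⟨?_, ?_, ?_, ?_, ?_, ?_, ?_, by linarith, ?_, ?_⟩ <;>
    simp only [v1, v2, e0, e1, e2, e3, e4, e5, e6, e7, e8, e9, e10, e11, e12, e13,
      e14, e15, e16, e17] <;> field_simp <;> ring
end

section
/- In the Selfridge-Conway procedure with agents 2 and 3 truthful, a strategic agent 1 can obtain utility 4/9 - ε > 1/3 while ending up envious: with the cake [0,1] split into six parts valued (0, 1/3, ε, 1/3-ε, ε, 1/3-ε) by agent 1 and (1/6, 1/6, 1/3, 0, 1/3, 0) by agents 2 and 3 (uniform within parts), if agent 1 cuts into pieces {parts 1-4}, {part 5}, {part 6}, then after the procedure agent 1's allocation is worth 4/9 - ε to her, strictly more than her truthful payoff of 1/3, while the agent who received the trimmed piece holds cake worth 5/9 to agent 1, so agent 1 envies that agent. -/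
/-! Auxiliary constructions: atomic (point-mass) valuations, which are
finitely additive on *all* pairs of disjoint sets. -/

open Classical in
noncomputable def atv (x w : ℝ) (S : Set ℝ) : ℝ := if x ∈ S then w else 0

lemma atv_nonneg {w : ℝ} (hw : 0 ≤ w) (x : ℝ) (S : Set ℝ) : 0 ≤ atv x w S := by
  unfold atv; split_ifs <;> simp [hw]

lemma atv_union (x w : ℝ) {S T : Set ℝ} (h : Disjoint S T) :
    atv x w (S ∪ T) = atv x w S + atv x w T := by
  unfold atv
  by_cases hS : x ∈ S
  · have hT : x ∉ T := Set.disjoint_left.mp h hS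
    simp [hS, hT]
  · by_cases hT : x ∈ T <;> simp [hS, hT]

/-- Agent 1's (index 0) valuation. -/
noncomputable def sv0 (ε : ℝ) (S : Set ℝ) : ℝ :=
  atv (5/24) (2/9) S + atv (7/24) (1/9) S + atv (5/12) ε S +
  atv (7/12) (1/3-ε) S + atv (3/4) ε S + atv (11/12) (1/3-ε) S

/-- Agents 2 and 3's (indices 1 and 2) common valuation. -/
noncomputable def sv12 (S : Set ℝ) : ℝ :=
  atv (1/24) (1/18) S + atv (1/12) (1/9) S + atv (5/24) (1/9) S +
  atv (7/24) (1/18) S + atv (5/12) (1/3) S + atv (3/4) (1/3) S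

noncomputable def sV (ε : ℝ) : Fin 3 → Set ℝ → ℝ := fun i => if i = 0 then sv0 ε else sv12

lemma sV_zero (ε : ℝ) : sV ε 0 = sv0 ε := rfl
lemma sV_one (ε : ℝ) : sV ε 1 = sv12 := rfl
lemma sV_two (ε : ℝ) : sV ε 2 = sv12 := rfl

lemma sV_ne {i : Fin 3} (ε : ℝ) (h : i ≠ 0) : sV ε i = sv12 := by
  simp [sV, h]

lemma sv0_union (ε : ℝ) {S T : Set ℝ} (h : Disjoint S T) :
    sv0 ε (S ∪ T) = sv0 ε S + sv0 ε T := by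
  unfold sv0
  rw [atv_union _ _ h, atv_union _ _ h, atv_union _ _ h, atv_union _ _ h,
    atv_union _ _ h, atv_union _ _ h]
  ring

lemma sv12_union {S T : Set ℝ} (h : Disjoint S T) :
    sv12 (S ∪ T) = sv12 S + sv12 T := by
  unfold sv12
  rw [atv_union _ _ h, atv_union _ _ h, atv_union _ _ h, atv_union _ _ h,
    atv_union _ _ h, atv_union _ _ h]
  ring

lemma sv0_nonneg {ε : ℝ} (h0 : 0 ≤ ε) (h1 : ε ≤ 1/3) (S : Set ℝ) : 0 ≤ sv0 ε S := by
  unfold sv0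
  refine add_nonneg (add_nonneg (add_nonneg (add_nonneg (add_nonneg ?_ ?_) ?_) ?_) ?_) ?_ <;>
    apply atv_nonneg <;> linarith

lemma sv12_nonneg (S : Set ℝ) : 0 ≤ sv12 S := by
  unfold sv12
  refine add_nonneg (add_nonneg (add_nonneg (add_nonneg (add_nonneg ?_ ?_) ?_) ?_) ?_) ?_ <;>
    apply atv_nonneg <;> linarith

/-- The six parts of the cake. -/
def sPart : Fin 6 → Set ℝ
  | ⟨0, _⟩ => Set.Ico 0 (1/6)
  | ⟨1, _⟩ => Set.Ico (1/6) (1/3)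
  | ⟨2, _⟩ => Set.Ico (1/3) (1/2)
  | ⟨3, _⟩ => Set.Ico (1/2) (2/3)
  | ⟨4, _⟩ => Set.Ico (2/3) (5/6)
  | ⟨5, _⟩ => Set.Icc (5/6) 1

/-- The three pieces cut by agent 1. -/
def sI : Fin 3 → Set ℝ
  | ⟨0, _⟩ => sPart 0 ∪ sPart 1 ∪ sPart 2 ∪ sPart 3
  | ⟨1, _⟩ => sPart 4
  | ⟨2, _⟩ => sPart 5

/-- The three pieces after agent 2's trim. -/
def sP : Fin 3 → Set ℝ
  | ⟨0, _⟩ => sPart 2 ∪ sPart 3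
  | ⟨1, _⟩ => sPart 4
  | ⟨2, _⟩ => sPart 5

/-- The three parts of the trimmings `T = [0, 1/3)`. -/
def sTp : Fin 3 → Set ℝ
  | ⟨0, _⟩ => Set.Ico (1/6) (1/4)
  | ⟨1, _⟩ => Set.Ico 0 (1/16) ∪ Set.Ico (1/4) (1/3)
  | ⟨2, _⟩ => Set.Ico (1/16) (1/6)

def sπ : Equiv.Perm (Fin 3) := ⟨![2,0,1], ![1,2,0], by decide, by decide⟩
def sτ : Equiv.Perm (Fin 3) := ⟨![1,0,2], ![1,0,2], by decide, by decide⟩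

lemma sπ_zero : sπ 0 = 2 := rfl
lemma sπ_one : sπ 1 = 0 := rfl
lemma sπ_two : sπ 2 = 1 := rfl
lemma sτ_zero : sτ 0 = 1 := rfl
lemma sτ_one : sτ 1 = 0 := rfl

lemma dIcoIco {a b c d : ℝ} (h : b ≤ c) : Disjoint (Set.Ico a b) (Set.Ico c d) := by
  rw [Set.disjoint_left]; rintro x ⟨_, h2⟩ ⟨h3, _⟩; linarith

lemma dIcoIcc {a b c d : ℝ} (h : b ≤ c) : Disjoint (Set.Ico a b) (Set.Icc c d) := by
  rw [Set.disjoint_left]; rintro x ⟨_, h2⟩ ⟨h3, _⟩; linarith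

lemma sPart_pairwise : Pairwise (Function.onFun Disjoint sPart) := by
  have d01 : Disjoint (sPart 0) (sPart 1) := dIcoIco (by norm_num)
  have d02 : Disjoint (sPart 0) (sPart 2) := dIcoIco (by norm_num)
  have d03 : Disjoint (sPart 0) (sPart 3) := dIcoIco (by norm_num)
  have d04 : Disjoint (sPart 0) (sPart 4) := dIcoIco (by norm_num)
  have d05 : Disjoint (sPart 0) (sPart 5) := dIcoIcc (by norm_num)
  have d12 : Disjoint (sPart 1) (sPart 2) := dIcoIco (by norm_num)
  have d13 : Disjoint (sPart 1) (sPart 3) := dIcoIco (by norm_num)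
  have d14 : Disjoint (sPart 1) (sPart 4) := dIcoIco (by norm_num)
  have d15 : Disjoint (sPart 1) (sPart 5) := dIcoIcc (by norm_num)
  have d23 : Disjoint (sPart 2) (sPart 3) := dIcoIco (by norm_num)
  have d24 : Disjoint (sPart 2) (sPart 4) := dIcoIco (by norm_num)
  have d25 : Disjoint (sPart 2) (sPart 5) := dIcoIcc (by norm_num)
  have d34 : Disjoint (sPart 3) (sPart 4) := dIcoIco (by norm_num)
  have d35 : Disjoint (sPart 3) (sPart 5) := dIcoIcc (by norm_num)
  have d45 : Disjoint (sPart 4) (sPart 5) := dIcoIcc (by norm_num)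
  intro a b hab
  fin_cases a <;> fin_cases b <;>
    first
    | exact d01
    | exact d01.symm
    | exact d02
    | exact d02.symm
    | exact d03
    | exact d03.symm
    | exact d04
    | exact d04.symm
    | exact d05
    | exact d05.symm
    | exact d12
    | exact d12.symm
    | exact d13
    | exact d13.symm
    | exact d14
    | exact d14.symm
    | exact d15
    | exact d15.symm
    | exact d23
    | exact d23.symm
    | exact d24
    | exact d24.symm
    | exact d25
    | exact d25.symm
    | exact d34
    | exact d34.symm
    | exact d35
    | exact d35.symm
    | exact d45
    | exact d45.symm
    | exact absurd rfl hab

lemma sTp_pairwise : Pairwise (Function.onFun Disjoint sTp) := by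
  have d01 : Disjoint (sTp 0) (sTp 1) := by
    show Disjoint (Set.Ico (1/6:ℝ) (1/4)) (Set.Ico 0 (1/16) ∪ Set.Ico (1/4) (1/3))
    exact Set.disjoint_union_right.mpr
      ⟨(dIcoIco (by norm_num)).symm, dIcoIco (by norm_num)⟩
  have d02 : Disjoint (sTp 0) (sTp 2) :=
    (dIcoIco (by norm_num : (1:ℝ)/6 ≤ 1/6)).symm
  have d12 : Disjoint (sTp 1) (sTp 2) := by
    show Disjoint (Set.Ico (0:ℝ) (1/16) ∪ Set.Ico (1/4) (1/3)) (Set.Ico (1/16) (1/6))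
    exact Set.disjoint_union_left.mpr
      ⟨dIcoIco (by norm_num), (dIcoIco (by norm_num)).symm⟩
  intro a b hab
  fin_cases a <;> fin_cases b <;> simp only [Function.onFun] <;>
    first
    | exact d01
    | exact d01.symm
    | exact d02
    | exact d02.symm
    | exact d12
    | exact d12.symm
    | exact absurd rfl hab

lemma sPart_iUnion : (⋃ a, sPart a) = Set.Icc (0:ℝ) 1 := by
  apply subset_antisymm
  · refine Set.iUnion_subset fun a => ?_
    fin_cases a <;>
      · intro x hx
        simp only [sPart, Set.mem_Ico, Set.mem_Icc] at hx ⊢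
        constructor <;> linarith [hx.1, hx.2]
  · intro x hx
    simp only [Set.mem_Icc] at hx
    obtain ⟨h0, h1⟩ := hx
    rw [Set.mem_iUnion]
    rcases lt_or_ge x (1/6) with h | h
    · exact ⟨0, show x ∈ Set.Ico (0:ℝ) (1/6) from ⟨h0, h⟩⟩
    rcases lt_or_ge x (1/3) with h2 | h2
    · exact ⟨1, show x ∈ Set.Ico (1/6:ℝ) (1/3) from ⟨h, h2⟩⟩
    rcases lt_or_ge x (1/2) with h3 | h3
    · exact ⟨2, show x ∈ Set.Ico (1/3:ℝ) (1/2) from ⟨h2, h3⟩⟩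
    rcases lt_or_ge x (2/3) with h4 | h4
    · exact ⟨3, show x ∈ Set.Ico (1/2:ℝ) (2/3) from ⟨h3, h4⟩⟩
    rcases lt_or_ge x (5/6) with h5 | h5
    · exact ⟨4, show x ∈ Set.Ico (2/3:ℝ) (5/6) from ⟨h4, h5⟩⟩
    · exact ⟨5, show x ∈ Set.Icc (5/6:ℝ) 1 from ⟨h5, h1⟩⟩

lemma sTp_iUnion : (⋃ a, sTp a) = sPart 0 ∪ sPart 1 := by
  apply subset_antisymm
  · refine Set.iUnion_subset fun a => ?_
    intro x hx
    fin_cases a <;>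
      simp only [sTp, Set.mem_union, Set.mem_Ico] at hx
    · exact Or.inr (show x ∈ Set.Ico (1/6:ℝ) (1/3) from ⟨hx.1, by linarith [hx.2]⟩)
    · rcases hx with hx | hx
      · exact Or.inl (show x ∈ Set.Ico (0:ℝ) (1/6) from ⟨hx.1, by linarith [hx.2]⟩)
      · exact Or.inr (show x ∈ Set.Ico (1/6:ℝ) (1/3) from ⟨by linarith [hx.1], hx.2⟩)
    · exact Or.inl (show x ∈ Set.Ico (0:ℝ) (1/6) from ⟨by linarith [hx.1], hx.2⟩)
  · intro x hx
    rw [Set.mem_iUnion]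
    simp only [sPart, Set.mem_union, Set.mem_Ico] at hx
    have h0 : 0 ≤ x := by rcases hx with h | h <;> [exact h.1; linarith [h.1]]
    have h3 : x < 1/3 := by rcases hx with h | h <;> [linarith [h.2]; exact h.2]
    rcases lt_or_ge x (1/16) with h | h
    · exact ⟨1, Or.inl (show x ∈ Set.Ico (0:ℝ) (1/16) from ⟨h0, h⟩)⟩
    rcases lt_or_ge x (1/6) with h2 | h2
    · exact ⟨2, show x ∈ Set.Ico (1/16:ℝ) (1/6) from ⟨h, h2⟩⟩
    rcases lt_or_ge x (1/4) with h4 | h4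
    · exact ⟨0, show x ∈ Set.Ico (1/6:ℝ) (1/4) from ⟨h2, h4⟩⟩
    · exact ⟨1, Or.inr (show x ∈ Set.Ico (1/4:ℝ) (1/3) from ⟨h4, h3⟩)⟩

/-- In the Selfridge-Conway procedure with agents 2 and 3 truthful, a strategic
agent 1 can obtain utility 4/9 - ε > 1/3 while ending up envious.  The cake [0,1] is
split into six parts valued (0, 1/3, ε, 1/3-ε, ε, 1/3-ε) by agent 1 (index 0) and
(1/6, 1/6, 1/3, 0, 1/3, 0) by agents 2 and 3 (indices 1 and 2).  Agent 1 cuts the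
cake into the pieces I 0 = parts 1-4, I 1 = part 5, I 2 = part 6.  There is a run of
the procedure in which agents 2 and 3 behave truthfully (agent 2 trims her best piece
to tie her second best; agent 3, then agent 2 — forced to take the trimmed piece if
still available — choose pieces; the non-holder j of the trimmed piece splits the
trimmings T into three v_j-equal parts; the holder i, then agent 1, then j choose
parts of T) such that agent 1's final allocation is worth 4/9 - ε to her — strictly
more than her truthful payoff of 1/3 — while the holder of the trimmed piece holds
cake worth 5/9 to agent 1, so agent 1 envies that agent. -/
theorem selfridge_conway_strategic_agent_gains_but_envies
    (ε : ℝ) (hε : 0 < ε) (hε' : ε < 1 / 100) :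
    ∃ (v : Fin 3 → Set ℝ → ℝ) (part : Fin 6 → Set ℝ),
      (∀ i S, 0 ≤ v i S) ∧
      (∀ i S T, Disjoint S T → v i (S ∪ T) = v i S + v i T) ∧
      (∀ i, v i (Set.Icc (0 : ℝ) 1) = 1) ∧
      Pairwise (Function.onFun Disjoint part) ∧
      (⋃ a, part a) = Set.Icc (0 : ℝ) 1 ∧
      v 0 (part 0) = 0 ∧ v 0 (part 1) = 1 / 3 ∧ v 0 (part 2) = ε ∧
      v 0 (part 3) = 1 / 3 - ε ∧ v 0 (part 4) = ε ∧ v 0 (part 5) = 1 / 3 - ε ∧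
      (∀ i : Fin 3, i ≠ 0 →
        v i (part 0) = 1 / 6 ∧ v i (part 1) = 1 / 6 ∧ v i (part 2) = 1 / 3 ∧
        v i (part 3) = 0 ∧ v i (part 4) = 1 / 3 ∧ v i (part 5) = 0) ∧
      ∃ I : Fin 3 → Set ℝ,
        I 0 = part 0 ∪ part 1 ∪ part 2 ∪ part 3 ∧ I 1 = part 4 ∧ I 2 = part 5 ∧
        ∃ (I1' T : Set ℝ) (P : Fin 3 → Set ℝ) (π : Equiv.Perm (Fin 3))
          (i j : Fin 3) (Tp : Fin 3 → Set ℝ) (τ : Equiv.Perm (Fin 3)),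
          -- agent 2 (index 1) truthfully trims her most valuable piece I 0:
          (∀ q, v 1 (I q) ≤ v 1 (I 0)) ∧
          I1' ∪ T = I 0 ∧ Disjoint I1' T ∧
          v 1 I1' = max (v 1 (I 1)) (v 1 (I 2)) ∧
          P 0 = I1' ∧ P 1 = I 1 ∧ P 2 = I 2 ∧
          -- truthful choices of the main pieces (agent p receives P (π p)):
          (∀ q, v 2 (P q) ≤ v 2 (P (π 2))) ∧
          (π 2 ≠ 0 → π 1 = 0) ∧
          (π 2 = 0 → ∀ q, q ≠ π 2 → v 1 (P q) ≤ v 1 (P (π 1))) ∧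
          i ≠ j ∧ i ≠ 0 ∧ j ≠ 0 ∧ π i = 0 ∧
          -- agent j truthfully splits the trimmings into three equal parts:
          Pairwise (Function.onFun Disjoint Tp) ∧ (⋃ a, Tp a) = T ∧
          (∀ a, v j (Tp a) = v j T / 3) ∧
          -- truthful choices of the trimming parts, in the order i, agent 1, j:
          (∀ a, v i (Tp a) ≤ v i (Tp (τ i))) ∧
          (∀ a, a ≠ τ i → v 0 (Tp a) ≤ v 0 (Tp (τ 0))) ∧
          -- outcome: agent 1 gets 4/9 - ε > 1/3 but envies the holder of I₁':
          v 0 (P (π 0) ∪ Tp (τ 0)) = 4 / 9 - ε ∧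
          (1 / 3 : ℝ) < 4 / 9 - ε ∧
          v 0 (P (π i) ∪ Tp (τ i)) = 5 / 9 := by
  refine ⟨sV ε, sPart, ?_, ?_, ?_, sPart_pairwise, sPart_iUnion, ?_, ?_, ?_, ?_, ?_, ?_, ?_,
    sI, rfl, rfl, rfl,
    sPart 2 ∪ sPart 3, sPart 0 ∪ sPart 1,
    sP, sπ, 1, 2, sTp, sτ,
    ?_, ?_, ?_, ?_, rfl, rfl, rfl, ?_, ?_, ?_, ?_, ?_, ?_, ?_,
    sTp_pairwise, sTp_iUnion, ?_, ?_, ?_, ?_, ?_, ?_⟩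
  · -- nonnegativity
    intro i S
    by_cases h : i = 0
    · rw [h, sV_zero]; exact sv0_nonneg (le_of_lt hε) (by linarith) S
    · rw [sV_ne ε h]; exact sv12_nonneg S
  · -- additivity
    intro i S T h
    by_cases hi : i = 0
    · rw [hi, sV_zero]; exact sv0_union ε h
    · rw [sV_ne ε hi]; exact sv12_union h
  · -- total value 1
    intro i
    by_cases hi : i = 0
    · rw [hi, sV_zero]; norm_num [sv0, atv, Set.mem_Icc]
    · rw [sV_ne ε hi]; norm_num [sv12, atv, Set.mem_Icc]
  · rw [sV_zero]; norm_num [sv0, atv, sPart, Set.mem_Ico]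
  · rw [sV_zero]; norm_num [sv0, atv, sPart, Set.mem_Ico]
  · rw [sV_zero]; norm_num [sv0, atv, sPart, Set.mem_Ico]
  · rw [sV_zero]; norm_num [sv0, atv, sPart, Set.mem_Ico]
  · rw [sV_zero]; norm_num [sv0, atv, sPart, Set.mem_Ico]
  · rw [sV_zero]; norm_num [sv0, atv, sPart, Set.mem_Icc]
  · -- agents 2 and 3 on the parts
    intro i hi
    rw [sV_ne ε hi]
    refine ⟨?_, ?_, ?_, ?_, ?_, ?_⟩ <;>
      norm_num [sv12, atv, sPart, Set.mem_Ico, Set.mem_Icc]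
  · -- I 0 is agent 2's most valuable piece
    intro q
    rw [sV_one]
    fin_cases q <;>
      norm_num [sv12, atv, sI, sPart, Set.mem_Ico, Set.mem_Icc, Set.mem_union]
  · -- I1' ∪ T = I 0
    show (sPart 2 ∪ sPart 3) ∪ (sPart 0 ∪ sPart 1) = sPart 0 ∪ sPart 1 ∪ sPart 2 ∪ sPart 3
    ext x
    simp only [Set.mem_union]
    tauto
  · -- Disjoint I1' T
    refine Set.disjoint_union_left.mpr ⟨?_, ?_⟩ <;>
      refine Set.disjoint_union_right.mpr ⟨?_, ?_⟩
    · exact (sPart_pairwise (by decide : (0:Fin 6) ≠ 2)).symm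
    · exact (sPart_pairwise (by decide : (1:Fin 6) ≠ 2)).symm
    · exact (sPart_pairwise (by decide : (0:Fin 6) ≠ 3)).symm
    · exact (sPart_pairwise (by decide : (1:Fin 6) ≠ 3)).symm
  · -- v 1 I1' = max (v 1 (I 1)) (v 1 (I 2))
    rw [sV_one]
    norm_num [sv12, atv, sI, sPart, Set.mem_Ico, Set.mem_Icc, Set.mem_union]
  · -- agent 3 takes her best piece
    intro q
    rw [sV_two, sπ_two]
    fin_cases q <;>
      norm_num [sv12, atv, sP, sPart, Set.mem_Ico, Set.mem_Icc, Set.mem_union]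
  · intro _; rfl
  · intro h; exact absurd h (by decide)
  · decide
  · decide
  · decide
  · rfl
  · -- agent 3 splits the trimmings equally
    intro a
    rw [sV_two]
    fin_cases a <;>
      norm_num [sv12, atv, sTp, sPart, Set.mem_Ico, Set.mem_Icc, Set.mem_union]
  · -- agent 2 takes her best trimming part (all are equal for her)
    intro a
    rw [sV_one, sτ_one]
    fin_cases a <;>
      norm_num [sv12, atv, sTp, Set.mem_Ico, Set.mem_union]
  · -- agent 1 takes her best remaining trimming part
    intro a ha
    rw [sV_zero, sτ_zero]
    rw [sτ_one] at ha
    fin_cases a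
    · exact absurd rfl ha
    · norm_num [sv0, atv, sTp, Set.mem_Ico, Set.mem_union]
    · norm_num [sv0, atv, sTp, Set.mem_Ico, Set.mem_union]
  · -- agent 1's final value
    rw [sV_zero, sπ_zero, sτ_zero]
    norm_num [sv0, atv, sP, sTp, sPart, Set.mem_Ico, Set.mem_Icc, Set.mem_union]
    try ring
  · linarith
  · -- the trimmed-piece holder's value to agent 1
    rw [sV_zero, sπ_one, sτ_one]
    norm_num [sv0, atv, sP, sTp, sPart, Set.mem_Ico, Set.mem_Icc, Set.mem_union]
    try ring
end

section
/- In repeated asymmetric cut-and-choose against a deterministic truthful chooser with half-point h, if the cutter knows from past observations that s < h ≤ t, then cutting at any x < s is weakly dominated by cutting at s, and cutting at any x > t is weakly dominated by cutting at t. -/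
/-- Repeated asymmetric cut-and-choose against a deterministic truthful chooser with
half-point h on the discrete cake [0,c]: cutting at x < h gives the cutter [0,x],
cutting at x ≥ h gives her [x+1,c].  If the cutter knows that s < h ≤ t, then any cut
x < s is weakly dominated by cutting at s, and any cut x > t is weakly dominated by
cutting at t (for every h consistent with the knowledge). -/
theorem acc_dominated_cuts
    (c : ℕ) (v : ℕ → ℕ → ℝ)
    (hnn : ∀ a b, 0 ≤ v a b)
    (hmono : ∀ a a' b b', a' ≤ a → b ≤ b' → v a b ≤ v a' b')
    (s t : ℕ) (hst : s < t) (htc : t ≤ c) :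
    (∀ x, x < s → ∀ h, s < h → h ≤ t →
      (if x < h then v 0 x else v (x + 1) c) ≤ (if s < h then v 0 s else v (s + 1) c)) ∧
    (∀ x, t < x → ∀ h, s < h → h ≤ t →
      (if x < h then v 0 x else v (x + 1) c) ≤ (if t < h then v 0 t else v (t + 1) c)) := by
  constructor
  · intro x hx h hsh hht
    rw [if_pos (lt_trans hx hsh), if_pos hsh]
    exact hmono 0 0 x s le_rfl hx.le
  · intro x hx h hsh hht
    rw [if_neg (by omega), if_neg (by omega)]
    exact hmono (x + 1) (t + 1) c c (by omega) le_rfl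
end
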